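/- arXiv:2008.08589 — 2 statements merged into one kernel-verified Lean document; each statement's English description precedes it below -/
import Mathlib

section
/- Let F be a field, I a finite index set, q : I → F with each q_i nonzero, and ω : I × I → F. Let A be an associative unital F-algebra containing two families of elements: 'R-elements' e_i^R, f_i^R, K_i^R, K_i'^R and 'L-elements' ê_i^L, f̂_i^L, K_i^L, K_i'^L (i ∈ I), such that: (i) every L-element commutes with every R-element; (ii) e_i^R f_j^R − f_j^R e_i^R = (q_i − q_i⁻¹)·(δ_{ij}·K_i'^R + ω_{ij}·K_i^R) for all i, j; (iii) ê_i^L f̂_j^L − f̂_j^L ê_i^L = −(q_i − q_i⁻¹)·(δ_{ij}·K_i^L + ω_{ij}·K_j'^L) for all i, j; (iv) for all i, j there is a nonzero scalar c_{ij} ∈ F with ê_i^L K_j'^L = c_{ij}·K_j'^L ê_i^L and K_i^R f_j^R = c_{ij}⁻¹·f_j^R K_i^R. Define e_i := e_i^R + ê_i^L·K_i^R, f_i := f̂_i^L + K_i'^L·f_i^R, K_i := K_i^L·K_i^R, K_i′ := K_i'^L·K_i'^R. Then for all i, j: e_i f_j − f_j e_i = δ_{ij}·(q_i − q_i⁻¹)·(K_i′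 − K_i). -/
/-- Combining a generalized Heisenberg double with its opposite copy via
e_i = e_i^R + ê_i^L K_i^R and f_i = f̂_i^L + K_i'^L f_i^R yields the defining
commutation relation [e_i, f_j] = δ_{ij}(q_i − q_i⁻¹)(K_i′ − K_i) of the
rescaled Drinfeld double (Proposition 5.4). -/
theorem stmt_11 {F : Type*} [Field F] {I : Type*} [Fintype I] [DecidableEq I]
    {A : Type*} [Ring A] [Algebra F A]
    (q : I → F) (hq : ∀ i, q i ≠ 0) (ω : I → I → F)
    (eR fR KR K'R : I → A) (eHatL fHatL KL K'L : I → A)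
    (hLR : ∀ i j, ∀ x ∈ ({eHatL i, fHatL i, KL i, K'L i} : Set A),
      ∀ y ∈ ({eR j, fR j, KR j, K'R j} : Set A), Commute x y)
    (hR : ∀ i j, eR i * fR j - fR j * eR i =
      (q i - (q i)⁻¹) • ((if i = j then (1 : F) else 0) • K'R i + ω i j • KR i))
    (hL : ∀ i j, eHatL i * fHatL j - fHatL j * eHatL i =
      -((q i - (q i)⁻¹) • ((if i = j then (1 : F) else 0) • KL i + ω i j • K'L j)))
    (c : I → I → F) (hc : ∀ i j, c i j ≠ 0)
    (hcomm1 : ∀ i j, eHatL i * K'L j = c i j • (K'L j * eHatL i))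
    (hcomm2 : ∀ i j, KR i * fR j = (c i j)⁻¹ • (fR j * KR i)) :
    ∀ i j,
      (eR i + eHatL i * KR i) * (fHatL j + K'L j * fR j) -
          (fHatL j + K'L j * fR j) * (eR i + eHatL i * KR i) =
        (if i = j then (1 : F) else 0) •
          ((q i - (q i)⁻¹) • (K'L i * K'R i - KL i * KR i)) := by
  intro i j
  have hfhe : Commute (fHatL j) (eR i) := hLR j i _ (by simp) _ (by simp)
  have hke : Commute (K'L j) (eR i) := hLR j i _ (by simp) _ (by simp)
  have hfk : Commute (fHatL j) (KR i) := hLR j i _ (by simp) _ (by simp)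
  have hkk : Commute (K'L j) (KR i) := hLR j i _ (by simp) _ (by simp)
  have hef : Commute (eHatL i) (fR j) := hLR i j _ (by simp) _ (by simp)
  -- the mixed term commutes
  have key : (eHatL i * KR i) * (K'L j * fR j) = (K'L j * fR j) * (eHatL i * KR i) := by
    calc eHatL i * KR i * (K'L j * fR j)
        = eHatL i * ((KR i * K'L j) * fR j) := by simp only [mul_assoc]
      _ = eHatL i * ((K'L j * KR i) * fR j) := by rw [hkk.eq]
      _ = (eHatL i * K'L j) * (KR i * fR j) := by simp only [mul_assoc]
      _ = (c i j • (K'L j * eHatL i)) * ((c i j)⁻¹ • (fR j * KR i)) := by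
            rw [hcomm1, hcomm2]
      _ = (c i j * (c i j)⁻¹) • ((K'L j * eHatL i) * (fR j * KR i)) := by
            rw [smul_mul_assoc, mul_smul_comm, smul_smul]
      _ = (K'L j * eHatL i) * (fR j * KR i) := by
            rw [mul_inv_cancel₀ (hc i j), one_smul]
      _ = K'L j * ((eHatL i * fR j) * KR i) := by simp only [mul_assoc]
      _ = K'L j * ((fR j * eHatL i) * KR i) := by rw [hef.eq]
      _ = K'L j * fR j * (eHatL i * KR i) := by simp only [mul_assoc]
  have e1 : eR i * (fHatL j + K'L j * fR j) - (fHatL j + K'L j * fR j) * eR i =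
      K'L j * (eR i * fR j - fR j * eR i) := by
    have h1 : eR i * (K'L j * fR j) = K'L j * (eR i * fR j) := by
      rw [← mul_assoc, ← hke.eq, mul_assoc]
    rw [mul_add, add_mul, ← hfhe.eq, h1, mul_assoc, mul_sub]
    abel
  have e2 : (eHatL i * KR i) * (fHatL j + K'L j * fR j) -
      (fHatL j + K'L j * fR j) * (eHatL i * KR i) =
      (eHatL i * fHatL j - fHatL j * eHatL i) * KR i := by
    have h1 : (eHatL i * KR i) * fHatL j = (eHatL i * fHatL j) * KR i := by
      rw [mul_assoc, ← hfk.eq, ← mul_assoc]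
    rw [mul_add, add_mul, key, h1, ← mul_assoc, sub_mul]
    simp only [mul_assoc]
    abel
  have expand : (eR i + eHatL i * KR i) * (fHatL j + K'L j * fR j) -
      (fHatL j + K'L j * fR j) * (eR i + eHatL i * KR i) =
      (eR i * (fHatL j + K'L j * fR j) - (fHatL j + K'L j * fR j) * eR i) +
      ((eHatL i * KR i) * (fHatL j + K'L j * fR j) -
        (fHatL j + K'L j * fR j) * (eHatL i * KR i)) := by
    simp only [add_mul, mul_add]
    abel
  rw [expand, e1, e2, hR, hL]
  by_cases h : i = j
  · subst h
    simp only [if_pos rfl, if_true, one_smul, mul_smul_comm, smul_mul_assoc, mul_add, add_mul,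
      smul_add, smul_sub, neg_smul, smul_neg, neg_mul, mul_neg, mul_assoc]
    abel
  · simp only [if_neg h, zero_smul, smul_zero, zero_add, mul_smul_comm, smul_mul_assoc,
      mul_add, add_mul, smul_add, smul_sub, neg_smul, smul_neg, neg_mul, mul_neg, mul_assoc]
    abel
end

section
/- Let F be a field, I a finite index set, q : I → F with each q_i nonzero, and σ : I → I a map. Let A be an associative unital F-algebra containing elements ē_i, f̄_i, K̄_i, K̄_i′ and e^J_i, f^J_i, and invertible elements K'^J_i (i ∈ I), such that for all i, j: (i) K'^J_j commutes with ē_i, with K̄_i, and with K̄_j′; (ii) ē_i commutes with f^J_j and K̄_i commutes with f^J_j; (iii) the element K̄_i·e^J_{σ(i)} commutes with the element K'^J_j·f̄_j; (iv) e^J_{σ(i)} f^J_j − f^J_j e^J_{σ(i)} = δ_{σ(i)j}·(q_i − q_i⁻¹)·K'^J_j; (v) setting E_i := ē_i + K̄_i·e^J_{σ(i)} and F_j := f^J_j + K'^J_j·f̄_j, one has E_i F_j − F_j E_i = δ_{ij}·(q_i − q_i⁻¹)·K'^J_j·K̄_j′. Then for all i, j: ē_i f̄_j − f̄_j ē_i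 = (q_i − q_i⁻¹)·(δ_{ij}·K̄_j′ − δ_{σ(i)j}·K̄_i). -/
/-- The barred generators obtained by splitting off the parabolic Heisenberg factor
satisfy the relations of the generalized Heisenberg double H_{q,ω}⁺ with
ω_{ij} = δ_{σ(i)j}: [ē_i, f̄_j] = (q_i − q_i⁻¹)(δ_{ij} K̄_j′ − δ_{σ(i)j} K̄_i). -/
theorem stmt_12 {F : Type*} [Field F] {I : Type*} [Fintype I] [DecidableEq I]
    {A : Type*} [Ring A] [Algebra F A]
    (q : I → F) (hq : ∀ i, q i ≠ 0) (σ : I → I)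
    (eBar fBar KBar K'Bar eJ fJ : I → A) (K'J : I → Aˣ)
    (h1 : ∀ i j, Commute ((K'J j : A)) (eBar i) ∧ Commute ((K'J j : A)) (KBar i) ∧
      Commute ((K'J j : A)) (K'Bar j))
    (h2 : ∀ i j, Commute (eBar i) (fJ j) ∧ Commute (KBar i) (fJ j))
    (h3 : ∀ i j, Commute (KBar i * eJ (σ i)) ((K'J j : A) * fBar j))
    (h4 : ∀ i j, eJ (σ i) * fJ j - fJ j * eJ (σ i) =
      (if σ i = j then (1 : F) else 0) • ((q i - (q i)⁻¹) • ((K'J j : A))))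
    (h5 : ∀ i j,
      (eBar i + KBar i * eJ (σ i)) * (fJ j + (K'J j : A) * fBar j) -
          (fJ j + (K'J j : A) * fBar j) * (eBar i + KBar i * eJ (σ i)) =
        (if i = j then (1 : F) else 0) •
          ((q i - (q i)⁻¹) • ((K'J j : A) * K'Bar j))) :
    ∀ i j, eBar i * fBar j - fBar j * eBar i =
      (q i - (q i)⁻¹) •
        ((if i = j then (1 : F) else 0) • K'Bar j -
          (if σ i = j then (1 : F) else 0) • KBar i) := by

  intro i j
  obtain ⟨hUa, hUK, hUK'⟩ := h1 i j
  obtain ⟨haf, hKf⟩ := h2 i j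
  have h3' := (h3 i j).eq
  have h4' := h4 i j
  have h5' := h5 i j
  set a := eBar i with ha
  set b := fBar j with hb
  set K := KBar i with hK
  set e := eJ (σ i) with he
  set f := fJ j with hf
  set U : A := (K'J j : A) with hU
  set s := q i - (q i)⁻¹ with hs
  set d1 : F := if i = j then (1 : F) else 0 with hd1
  set d2 : F := if σ i = j then (1 : F) else 0 with hd2
  have m1 : a * (U * b) = U * (a * b) := by
    rw [← mul_assoc, ← hUa.eq, mul_assoc]
  have m4 : f * (K * e) = K * (f * e) := by
    rw [← mul_assoc, ← hKf.eq, mul_assoc]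
  have step : U * (a * b - b * a) + K * (e * f - f * e) = d1 • s • (U * K'Bar j) := by
    rw [← h5']
    simp only [add_mul, mul_add, mul_sub]
    rw [m1, m4, haf.eq, h3', mul_assoc U b a, mul_assoc K e f]
    abel
  have key : U * (a * b - b * a) = U * (s • (d1 • K'Bar j - d2 • K)) := by
    have h4'' : K * (e * f - f * e) = d2 • s • (U * K) := by
      rw [h4', mul_smul_comm, mul_smul_comm, hUK.eq]
    rw [h4''] at step
    calc U * (a * b - b * a) = d1 • s • (U * K'Bar j) - d2 • s • (U * K) :=
          eq_sub_of_add_eq step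
      _ = U * (s • (d1 • K'Bar j - d2 • K)) := by
          simp only [smul_sub, mul_sub, mul_smul_comm, smul_smul]
          rw [mul_comm s d1, mul_comm s d2]
  exact (Units.mul_right_inj (K'J j)).mp key
end
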